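/- arXiv:1709.00586 — 6 statements merged into one kernel-verified Lean document; each statement's English description precedes it below -/
import Mathlib

section
/- For all real numbers x, y, z with 0 < z ≤ y ≤ x, the quantity M(x,y,z) = y^(z−x) · z^(x−y) · x^(y−z) satisfies M(x,y,z) ≤ 1. -/
/-!
Put `a = x - y ≥ 0` and `b = y - z ≥ 0`. Then
`log M = a log (z / y) + b log (x / y) ≤ a (z / y - 1) + b (x / y - 1) = (-a b + b a) / y = 0`
by `log t ≤ t - 1`.
-/

open Real

lemma log_rpow_sub_mul_rpow_sub_mul_rpow_sub {x y z : ℝ} (hx : 0 < x) (hy : 0 < y) (hz : 0 < z) :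
    log (y ^ (z - x) * z ^ (x - y) * x ^ (y - z)) =
      (x - y) * log (z / y) + (y - z) * log (x / y) := by
  rw [log_mul (by positivity) (by positivity), log_mul (by positivity) (by positivity),
    log_rpow hy, log_rpow hz, log_rpow hx, log_div hz.ne' hy.ne', log_div hx.ne' hy.ne']
  ring

lemma mul_log_div_add_mul_log_div_nonpos {x y z : ℝ} (hz : 0 < z) (hzy : z ≤ y) (hyx : y ≤ x) :
    (x - y) * log (z / y) + (y - z) * log (x / y) ≤ 0 := by
  have hy : 0 < y := hz.trans_le hzy
  have hx : 0 < x := hy.trans_le hyx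
  calc (x - y) * log (z / y) + (y - z) * log (x / y)
      ≤ (x - y) * (z / y - 1) + (y - z) * (x / y - 1) := by
        gcongr <;> first | linarith | exact log_le_sub_one_of_pos (by positivity)
    _ = 0 := by field_simp; ring

theorem M_le_one (x y z : ℝ) (hz : 0 < z) (hzy : z ≤ y) (hyx : y ≤ x) :
    y ^ (z - x) * z ^ (x - y) * x ^ (y - z) ≤ 1 := by
  have hy : 0 < y := hz.trans_le hzy
  have hx : 0 < x := hy.trans_le hyx
  rw [← log_nonpos_iff (by positivity), log_rpow_sub_mul_rpow_sub_mul_rpow_sub hx hy hz]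
  exact mul_log_div_add_mul_log_div_nonpos hz hzy hyx
end

section
/- For real numbers x, y, z with 0 < z < y < x, the quantity M(x,y,z) = y^(z−x) · z^(x−y) · x^(y−z) satisfies M(x,y,z) < 1 (strict inequality in the interior of the domain). -/
/-!
Taking logarithms, `log M(x, y, z) = (z - x) log y + (x - y) log z + (y - z) log x`.
Since `y` lies strictly between `z` and `x`, strict concavity of `log` puts `log y` strictly above
the chord through `(z, log z)` and `(x, log x)`, which says exactly that this quantity is negative.
-/

open Real

theorem StrictConcaveOn.sub_mul_add_sub_mul_lt {𝕜 : Type*} [Field 𝕜] [LinearOrder 𝕜]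
    [IsStrictOrderedRing 𝕜] {s : Set 𝕜} {f : 𝕜 → 𝕜} (hf : StrictConcaveOn 𝕜 s f) {a b c : 𝕜}
    (ha : a ∈ s) (hc : c ∈ s) (hab : a < b) (hbc : b < c) :
    (c - b) * f a + (b - a) * f c < (c - a) * f b := by
  have hslope := hf.slope_anti_adjacent ha hc hab hbc
  rw [div_lt_div_iff₀ (sub_pos.mpr hbc) (sub_pos.mpr hab)] at hslope
  linarith

theorem M_lt_one (x y z : ℝ) (hz : 0 < z) (hzy : z < y) (hyx : y < x) :
    y ^ (z - x) * z ^ (x - y) * x ^ (y - z) < 1 := by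
  have hy : 0 < y := hz.trans hzy
  have hx : 0 < x := hy.trans hyx
  have hchord := strictConcaveOn_log_Ioi.sub_mul_add_sub_mul_lt hz hx hzy hyx
  rw [rpow_def_of_pos hy, rpow_def_of_pos hz, rpow_def_of_pos hx, ← exp_add, ← exp_add,
    exp_lt_one_iff]
  linarith
end

section
/- For 0 < b < 1 and 1 < a < 1/b, the function H(a,b) = a(1−b)·ln(a) + (a−1)·ln(b) is strictly negative. -/
/-!
As a function of `a`, `H(a, b)` is `(1 - b) · a log a` plus an affine function of `a`, hence
strictly convex on `[0, ∞)`. It vanishes at `a = 1` and `a = 1/b`, so it is negative strictly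
between them.
-/

open Real Set

lemma StrictConvexOn.const_mul_add_affine {s : Set ℝ} {f : ℝ → ℝ} (hf : StrictConvexOn ℝ s f)
    {k : ℝ} (hk : 0 < k) (c d : ℝ) : StrictConvexOn ℝ s fun x ↦ k * f x + c * x + d := by
  refine ⟨hf.1, fun x hx y hy hxy t u ht hu htu ↦ ?_⟩
  have hlt := mul_lt_mul_of_pos_left (hf.2 hx hy hxy ht hu htu) hk
  simp only [smul_eq_mul] at hlt ⊢
  linear_combination hlt - d * htu

lemma StrictConvexOn.lt_zero_of_eq_zero {s : Set ℝ} {f : ℝ → ℝ} (hf : StrictConvexOn ℝ s f)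
    {x y z : ℝ} (hx : x ∈ s) (hy : y ∈ s) (hxz : x < z) (hzy : z < y) (hfx : f x = 0)
    (hfy : f y = 0) : f z < 0 := by
  have hz : z ∈ openSegment ℝ x y := by rw [openSegment_eq_Ioo (hxz.trans hzy)]; exact ⟨hxz, hzy⟩
  simpa [hfx, hfy] using hf.lt_on_openSegment hx hy (hxz.trans hzy).ne hz

theorem H_neg (a b : ℝ) (hb0 : 0 < b) (hb1 : b < 1) (ha1 : 1 < a) (hab : a < 1 / b) :
    a * (1 - b) * Real.log a + (a - 1) * Real.log b < 0 := by
  have hconvex : StrictConvexOn ℝ (Ici 0) fun x ↦ (1 - b) * (x * log x) + log b * x - log b := by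
    simpa only [sub_eq_add_neg] using
      strictConvexOn_mul_log.const_mul_add_affine (sub_pos.2 hb1) (log b) (-log b)
  have hvanish : (1 - b) * (1 / b * log (1 / b)) + log b * (1 / b) - log b = 0 := by
    rw [one_div, log_inv]
    field_simp
    ring
  have hneg := hconvex.lt_zero_of_eq_zero (mem_Ici.2 zero_le_one) (mem_Ici.2 (by positivity))
    ha1 hab (by simp) hvanish
  linear_combination hneg
end

section
/- Let a, b, c > 0 and 2 < p < q < r with p < 6. Define g(t) = 1 + (b(q−2)(6−q))/(a(p−2)(6−p))·t − (c(r−2)(6−r))/(a(p−2)(6−p))·t^((r−p)/(q−p)) and h(t) = 1 + (b(q−2))/(a(p−2))·t − (c(r−2))/(a(p−2))·t^((r−p)/(q−p)). If t₀ > 0 satisfies h(t₀) = 0, then g(t₀) = (b(q−2)(r−q))/(a(p−2)(6−p))·t₀ + 1 − (6−r)/(6−p) > 0. -/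
/-! The zero `h t₀ = 0` expresses the term `t₀ ^ ((r - p) / (q - p))` affinely in `t₀`.
Substituting it into `g` removes the power: what remains is a positive multiple of `t₀`
(as `q < r`) plus `1 - (6 - r) / (6 - p)`, which is positive since `p < r` and `p < 6`. -/

lemma three_power_g_eq_of_h_eq_zero {a b c p q r t y : ℝ} (ha : a ≠ 0) (hp2 : p - 2 ≠ 0)
    (hp6 : 6 - p ≠ 0)
    (hzero : 1 + b * (q - 2) / (a * (p - 2)) * t - c * (r - 2) / (a * (p - 2)) * y = 0) :
    1 + b * (q - 2) * (6 - q) / (a * (p - 2) * (6 - p)) * t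
        - c * (r - 2) * (6 - r) / (a * (p - 2) * (6 - p)) * y
      = b * (q - 2) * (r - q) / (a * (p - 2) * (6 - p)) * t + 1 - (6 - r) / (6 - p) := by
  have hy : c * (r - 2) * y = a * (p - 2) + b * (q - 2) * t := by
    field_simp at hzero
    linarith
  field_simp
  linear_combination (-(6 - r)) * hy

lemma three_power_g_value_pos {a b p q r t : ℝ} (ha : 0 < a) (hb : 0 < b) (hp : 2 < p)
    (hpq : p < q) (hqr : q < r) (hp6 : p < 6) (ht : 0 < t) :
    0 < b * (q - 2) * (r - q) / (a * (p - 2) * (6 - p)) * t + 1 - (6 - r) / (6 - p) := by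
  have hlin : 0 < b * (q - 2) * (r - q) / (a * (p - 2) * (6 - p)) * t := by
    have : 0 < a * (p - 2) * (6 - p) := by
      have : 0 < p - 2 := by linarith
      have : 0 < 6 - p := by linarith
      positivity
    have : 0 < q - 2 := by linarith
    have : 0 < r - q := by linarith
    positivity
  have hratio : (6 - r) / (6 - p) < 1 := (div_lt_one (by linarith)).mpr (by linarith)
  linarith

theorem g_pos_at_zero_of_h_general (a b c p q r : ℝ) (ha : 0 < a) (hb : 0 < b)
    (hp : 2 < p) (hpq : p < q) (hqr : q < r) (hp6 : p < 6)
    (g h : ℝ → ℝ)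
    (hg : ∀ t : ℝ, g t = 1 + b * (q - 2) * (6 - q) / (a * (p - 2) * (6 - p)) * t
        - c * (r - 2) * (6 - r) / (a * (p - 2) * (6 - p)) * t ^ ((r - p) / (q - p)))
    (hh : ∀ t : ℝ, h t = 1 + b * (q - 2) / (a * (p - 2)) * t
        - c * (r - 2) / (a * (p - 2)) * t ^ ((r - p) / (q - p)))
    (t₀ : ℝ) (ht₀ : 0 < t₀) (hzero : h t₀ = 0) :
    g t₀ = b * (q - 2) * (r - q) / (a * (p - 2) * (6 - p)) * t₀ + 1 - (6 - r) / (6 - p) ∧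
    0 < g t₀ := by
  have hg₀ : g t₀ = b * (q - 2) * (r - q) / (a * (p - 2) * (6 - p)) * t₀ + 1
      - (6 - r) / (6 - p) := by
    rw [hg]
    refine three_power_g_eq_of_h_eq_zero ha.ne' (by linarith) (by linarith) ?_
    rwa [← hh]
  exact ⟨hg₀, hg₀ ▸ three_power_g_value_pos ha hb hp hpq hqr hp6 ht₀⟩

theorem g_pos_at_zero_of_h (a b c p q r : ℝ) (ha : 0 < a) (hb : 0 < b) (hc : 0 < c)
    (hp : 2 < p) (hpq : p < q) (hqr : q < r) (hp6 : p < 6)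
    (g h : ℝ → ℝ)
    (hg : ∀ t : ℝ, g t = 1 + b * (q - 2) * (6 - q) / (a * (p - 2) * (6 - p)) * t
        - c * (r - 2) * (6 - r) / (a * (p - 2) * (6 - p)) * t ^ ((r - p) / (q - p)))
    (hh : ∀ t : ℝ, h t = 1 + b * (q - 2) / (a * (p - 2)) * t
        - c * (r - 2) / (a * (p - 2)) * t ^ ((r - p) / (q - p)))
    (t₀ : ℝ) (ht₀ : 0 < t₀) (hzero : h t₀ = 0) :
    g t₀ = b * (q - 2) * (r - q) / (a * (p - 2) * (6 - p)) * t₀ + 1 - (6 - r) / (6 - p) ∧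
    0 < g t₀ :=
  g_pos_at_zero_of_h_general a b c p q r ha hb hp hpq hqr hp6 g h hg hh t₀ ht₀ hzero
end

section
/- Let a, b, c > 0 and p > 6 with p < q < r. Define h(t) = 1 − (b(q−2))/(a(p−2))·t + (c(r−2))/(a(p−2))·t^((r−p)/(q−p)) and g(t) = 1 − (b(q−2)(6−q))/(a(p−2)(6−p))·t + (c(r−2)(6−r))/(a(p−2)(6−p))·t^((r−p)/(q−p)). If t₁ > 0 satisfies h(t₁) = 0 and h'(t₁) < 0, then t₁ < (a(p−2)(r−p))/(b(q−2)(r−q)) and g(t₁) < 0. -/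
/-!
Normalize by `a (p - 2)`, so that `h t = 1 - β t + γ t ^ μ` with `μ = (r - p) / (q - p) > 1`.
At the root `t₁` the relation `γ t₁ ^ μ = β t₁ - 1` eliminates the power term: the condition
`h' t₁ < 0` becomes `(μ - 1) β t₁ < μ`, i.e. `(r - q) β t₁ < r - p`, which is the bound on `t₁`,
and `(6 - p) g t₁ = (r - p) - (r - q) β t₁`, which is positive while `6 - p < 0`.
-/

open Real

theorem hasDerivAt_one_sub_mul_add_mul_rpow {β γ μ t : ℝ} (ht : t ≠ 0) :
    HasDerivAt (fun t => 1 - β * t + γ * t ^ μ) (-β + γ * (μ * t ^ (μ - 1))) t := by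
  simpa using (((hasDerivAt_id' t).const_mul β).const_sub 1).fun_add
    ((hasDerivAt_rpow_const (Or.inl ht)).const_mul γ)

theorem sub_one_mul_mul_lt_of_root_of_deriv_neg {β γ μ t : ℝ} (ht : 0 < t)
    (hroot : 1 - β * t + γ * t ^ μ = 0)
    (hderiv : deriv (fun t => 1 - β * t + γ * t ^ μ) t < 0) :
    (μ - 1) * β * t < μ := by
  rw [(hasDerivAt_one_sub_mul_add_mul_rpow ht.ne').deriv, rpow_sub_one ht.ne'] at hderiv
  have hpow : γ * t ^ μ = β * t - 1 := by linarith
  have hpow_div : γ * (μ * (t ^ μ / t)) * t = μ * (β * t - 1) := by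
    rw [← hpow]; field_simp
  linarith [mul_neg_of_neg_of_pos hderiv ht]

theorem one_sub_mul_add_mul_neg_of_root {β γ T t p q r s : ℝ} (hsp : s < p)
    (hroot : 1 - β * t + γ * T = 0) (hbound : (r - q) * β * t < r - p) :
    1 - β * ((s - q) / (s - p)) * t + γ * ((s - r) / (s - p)) * T < 0 := by
  have hsp' : s - p < 0 := sub_neg.mpr hsp
  have hscaled : (1 - β * ((s - q) / (s - p)) * t + γ * ((s - r) / (s - p)) * T) * (s - p)
      = (r - p) - (r - q) * β * t := by
    have hT : γ * T = β * t - 1 := by linarith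
    field_simp [hsp'.ne]
    linear_combination (s - r) * hT
  exact neg_of_mul_pos_left (by linarith) hsp'.le

theorem t1_bound_and_g_neg_general (a b c p q r : ℝ) (ha : 0 < a) (hb : 0 < b)
    (hp6 : 6 < p) (hpq : p < q) (hqr : q < r)
    (g h : ℝ → ℝ)
    (hh : ∀ t : ℝ, h t = 1 - b * (q - 2) / (a * (p - 2)) * t
        + c * (r - 2) / (a * (p - 2)) * t ^ ((r - p) / (q - p)))
    (hg : ∀ t : ℝ, g t = 1 - b * (q - 2) * (6 - q) / (a * (p - 2) * (6 - p)) * t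
        + c * (r - 2) * (6 - r) / (a * (p - 2) * (6 - p)) * t ^ ((r - p) / (q - p)))
    (t₁ : ℝ) (ht₁ : 0 < t₁) (hzero : h t₁ = 0) (hderiv : deriv h t₁ < 0) :
    t₁ < a * (p - 2) * (r - p) / (b * (q - 2) * (r - q)) ∧ g t₁ < 0 := by
  have hA : 0 < a * (p - 2) := mul_pos ha (by linarith)
  have hB : 0 < b * (q - 2) := mul_pos hb (by linarith)
  have hqp : 0 < q - p := by linarith
  obtain rfl : h = fun t => 1 - b * (q - 2) / (a * (p - 2)) * t
      + c * (r - 2) / (a * (p - 2)) * t ^ ((r - p) / (q - p)) := funext hh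
  set β := b * (q - 2) / (a * (p - 2))
  have hμ := sub_one_mul_mul_lt_of_root_of_deriv_neg ht₁ hzero hderiv
  have hbound : (r - q) * β * t₁ < r - p := by
    have hμ' : (r - p) / (q - p) - 1 = (r - q) / (q - p) := by field_simp; ring
    rwa [hμ', div_mul_eq_mul_div, div_mul_eq_mul_div, div_lt_div_iff_of_pos_right hqp] at hμ
  constructor
  · have hβA : β * (a * (p - 2)) = b * (q - 2) := div_mul_cancel₀ _ hA.ne'
    rw [lt_div_iff₀ (mul_pos hB (sub_pos.mpr hqr))]
    calc t₁ * (b * (q - 2) * (r - q)) = (r - q) * β * t₁ * (a * (p - 2)) := by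
          rw [← hβA]; ring
      _ < (r - p) * (a * (p - 2)) := mul_lt_mul_of_pos_right hbound hA
      _ = a * (p - 2) * (r - p) := mul_comm _ _
  · rw [hg, mul_div_mul_comm (b * (q - 2)), mul_div_mul_comm (c * (r - 2))]
    exact one_sub_mul_add_mul_neg_of_root hp6 hzero hbound

theorem t1_bound_and_g_neg (a b c p q r : ℝ) (ha : 0 < a) (hb : 0 < b) (hc : 0 < c)
    (hp6 : 6 < p) (hpq : p < q) (hqr : q < r)
    (g h : ℝ → ℝ)
    (hh : ∀ t : ℝ, h t = 1 - b * (q - 2) / (a * (p - 2)) * t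
        + c * (r - 2) / (a * (p - 2)) * t ^ ((r - p) / (q - p)))
    (hg : ∀ t : ℝ, g t = 1 - b * (q - 2) * (6 - q) / (a * (p - 2) * (6 - p)) * t
        + c * (r - 2) * (6 - r) / (a * (p - 2) * (6 - p)) * t ^ ((r - p) / (q - p)))
    (t₁ : ℝ) (ht₁ : 0 < t₁) (hzero : h t₁ = 0) (hderiv : deriv h t₁ < 0) :
    t₁ < a * (p - 2) * (r - p) / (b * (q - 2) * (r - q)) ∧ g t₁ < 0 :=
  t1_bound_and_g_neg_general a b c p q r ha hb hp6 hpq hqr g h hh hg t₁ ht₁ hzero hderiv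
end

section
/- Let 2 < p < q < r < 6. Then (6−p) < (6−q)^((r−p)/(r−q)) · (6−r)^((p−q)/(r−q)). -/
/-!
With `x = 6 - p`, `y = 6 - q`, `z = 6 - r` we have `0 < z < y < x`, and after taking logarithms
and clearing the denominator `y - z` the claim reads
`(y - z) log x + (x - y) log z < (x - z) log y`. This is strict concavity of `log` at
`y = ((y - z) x + (x - y) z) / (x - z)`.
-/

open Real Set

lemma lt_rpow_mul_rpow_of_lt_of_lt {x y z : ℝ} (hz : 0 < z) (hzy : z < y) (hyx : y < x) :
    x < y ^ ((x - z) / (y - z)) * z ^ ((y - x) / (y - z)) := by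
  have hy : 0 < y := hz.trans hzy
  have hx : 0 < x := hy.trans hyx
  have hxz : 0 < x - z := by linarith
  have hyz : 0 < y - z := by linarith
  have hlog : (y - z) / (x - z) * log x + (x - y) / (x - z) * log z < log y := by
    have h := strictConcaveOn_log_Ioi.2 (mem_Ioi.2 hx) (mem_Ioi.2 hz) (hzy.trans hyx).ne'
      (div_pos hyz hxz) (div_pos (sub_pos.2 hyx) hxz) (by field_simp; ring)
    rwa [smul_eq_mul, smul_eq_mul, smul_eq_mul, smul_eq_mul,
      show (y - z) / (x - z) * x + (x - y) / (x - z) * z = y by field_simp; ring] at h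
  rw [← log_lt_log_iff hx (by positivity), log_mul (by positivity) (by positivity),
    log_rpow hy, log_rpow hz, div_mul_eq_mul_div, div_mul_eq_mul_div, ← add_div,
    lt_div_iff₀ hyz]
  rw [div_mul_eq_mul_div, div_mul_eq_mul_div, ← add_div, div_lt_iff₀ hxz] at hlog
  linarith

theorem weighted_gm_ineq_six_general (p q r : ℝ) (hpq : p < q) (hqr : q < r) (hr6 : r < 6) :
    6 - p < (6 - q) ^ ((r - p) / (r - q)) * (6 - r) ^ ((p - q) / (r - q)) := by
  have h := lt_rpow_mul_rpow_of_lt_of_lt (x := 6 - p) (y := 6 - q) (sub_pos.2 hr6)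
    (by linarith) (by linarith)
  convert h using 4 <;> ring

theorem weighted_gm_ineq_six (p q r : ℝ) (hp : 2 < p) (hpq : p < q) (hqr : q < r) (hr6 : r < 6) :
    6 - p < (6 - q) ^ ((r - p) / (r - q)) * (6 - r) ^ ((p - q) / (r - q)) :=
  weighted_gm_ineq_six_general p q r hpq hqr hr6
end
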